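/- Let ω_{E,t} and ω_{E,t+1} be the weights of Optimistic Exponential Weights over a finite expert set E with step size η ∈ (0, 1/4] and losses in [0,1], i.e., ω_{E,t+1} ∝ ω_{E,t}·exp(−η(2ℓ_t(E) − ℓ_{t−1}(E))). Then Σ_E |ω_{E,t} − ω_{E,t+1}| ≤ 5η. -/

import Mathlib

/-!
Each unnormalised factor `f_E = exp (-η (2 ℓₜ(E) - ℓₜ₋₁(E)))` lies in `[e^{-2η}, e^{η}]`, hence so
does its `ω`-average `S`. The new weight `ω_E f_E / S` therefore differs from `ω_E` by
`ω_E |S - f_E| / S ≤ ω_E (e^{η} - e^{-2η}) / e^{-2η}`, so the total `ℓ₁` movement is at most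
`e^{3η} - 1`, which is `≤ 5η` for `η ≤ 1/4` by the cubic Taylor bound for `exp`.
-/

open Finset

namespace Finset

variable {ι : Type*} {s : Finset ι} {ω f : ι → ℝ} {a b : ℝ}

theorem sum_mul_mem_Icc_of_forall_mem_Icc (hω0 : ∀ i ∈ s, 0 ≤ ω i) (hω1 : ∑ i ∈ s, ω i = 1)
    (hf : ∀ i ∈ s, f i ∈ Set.Icc a b) : ∑ i ∈ s, ω i * f i ∈ Set.Icc a b := by
  constructor
  · calc a = ∑ i ∈ s, ω i * a := by rw [← sum_mul, hω1, one_mul]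
      _ ≤ ∑ i ∈ s, ω i * f i := sum_le_sum fun i hi =>
          mul_le_mul_of_nonneg_left (hf i hi).1 (hω0 i hi)
  · calc ∑ i ∈ s, ω i * f i ≤ ∑ i ∈ s, ω i * b := sum_le_sum fun i hi =>
          mul_le_mul_of_nonneg_left (hf i hi).2 (hω0 i hi)
      _ = b := by rw [← sum_mul, hω1, one_mul]

theorem sum_abs_sub_mul_div_sum_mul_le (ha : 0 < a) (hω0 : ∀ i ∈ s, 0 ≤ ω i)
    (hω1 : ∑ i ∈ s, ω i = 1) (hf : ∀ i ∈ s, f i ∈ Set.Icc a b) :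
    ∑ i ∈ s, |ω i - ω i * f i / ∑ j ∈ s, ω j * f j| ≤ (b - a) / a := by
  set S := ∑ j ∈ s, ω j * f j
  have hS : S ∈ Set.Icc a b := sum_mul_mem_Icc_of_forall_mem_Icc hω0 hω1 hf
  have hS0 : 0 < S := ha.trans_le hS.1
  calc ∑ i ∈ s, |ω i - ω i * f i / S| = ∑ i ∈ s, ω i * |S - f i| / S := by
        refine sum_congr rfl fun i hi => ?_
        rw [show ω i - ω i * f i / S = ω i * (S - f i) / S by field_simp, abs_div, abs_mul,
          abs_of_nonneg (hω0 i hi), abs_of_pos hS0]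
    _ ≤ ∑ i ∈ s, ω i * (b - a) / S := by
        gcongr with i hi
        · exact hω0 i hi
        · exact abs_sub_le_of_le_of_le hS.1 hS.2 (hf i hi).1 (hf i hi).2
    _ = (b - a) / S := by rw [← sum_div, ← sum_mul, hω1, one_mul]
    _ ≤ (b - a) / a := div_le_div_of_nonneg_left (by linarith [hS.1, hS.2]) ha hS.1

end Finset

theorem Real.exp_three_mul_sub_one_le {η : ℝ} (h0 : 0 ≤ η) (h1 : η ≤ 1 / 4) :
    Real.exp (3 * η) - 1 ≤ 5 * η := by
  have h := Real.exp_bound' (x := 3 * η) (by linarith) (by linarith) (n := 3) (by norm_num)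
  norm_num [Finset.sum_range_succ, Nat.factorial] at h
  nlinarith

theorem stmt18 {E : Type*} [Fintype E] (η : ℝ) (hη0 : 0 < η) (hη1 : η ≤ 1 / 4)
    (ω : E → ℝ) (hω0 : ∀ e, 0 ≤ ω e) (hω1 : ∑ e, ω e = 1)
    (ℓt ℓp : E → ℝ)
    (hℓt : ∀ e, ℓt e ∈ Set.Icc (0:ℝ) 1) (hℓp : ∀ e, ℓp e ∈ Set.Icc (0:ℝ) 1) :
    ∑ e, |ω e -
        ω e * Real.exp (-η * (2 * ℓt e - ℓp e)) /
          (∑ e', ω e' * Real.exp (-η * (2 * ℓt e' - ℓp e')))| ≤ 5 * η := by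
  have hfactor : ∀ e ∈ univ,
      Real.exp (-η * (2 * ℓt e - ℓp e)) ∈ Set.Icc (Real.exp (-(2 * η))) (Real.exp η) := by
    intro e _
    obtain ⟨ht0, ht1⟩ := hℓt e
    obtain ⟨hp0, hp1⟩ := hℓp e
    constructor <;> apply Real.exp_le_exp.2 <;> nlinarith
  calc _ ≤ (Real.exp η - Real.exp (-(2 * η))) / Real.exp (-(2 * η)) :=
        sum_abs_sub_mul_div_sum_mul_le (Real.exp_pos _) (fun e _ => hω0 e) hω1 hfactor
    _ = Real.exp (3 * η) - 1 := by
        rw [sub_div, div_self (Real.exp_pos _).ne', ← Real.exp_sub]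
        ring_nf
    _ ≤ 5 * η := Real.exp_three_mul_sub_one_le hη0.le hη1
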